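/- Let A ∈ ℝ^{d×p}, B ∈ ℝ^{d×q}, m_A = (1/p) A 1_p, m_B = (1/q) B 1_q, and let M̄_B ∈ ℝ^{d×p} be the matrix whose every column is m_B, and M̄_A ∈ ℝ^{d×q} the matrix whose every column is m_A. Then ‖A − M̄_B‖_F² + ‖B − M̄_A‖_F² = ‖[A B] Ψ‖_F², where Ψ ∈ ℝ^{(p+q)×(p+q)} is the block matrix with blocks Ψ_{11} = I_p, Ψ_{12} = −(1/p) 1_p 1_q^T, Ψ_{21} = −(1/q) 1_q 1_p^T, Ψ_{22} = I_q. -/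

import Mathlib

open Matrix BigOperators

def frobSq {α β : Type*} [Fintype α] [Fintype β] (M : Matrix α β ℝ) : ℝ :=
  ∑ i, ∑ j, (M i j) ^ 2

/-! Multiplying `[A B]` by `Ψ` subtracts from each block the other block's column mean repeated
across its columns, so `[A B] Ψ = [A - M̄_B, B - M̄_A]`; the squared Frobenius norm of a
horizontal concatenation is the sum of those of its blocks. -/

theorem frobSq_fromCols {α β γ : Type*} [Fintype α] [Fintype β] [Fintype γ]
    (M : Matrix α β ℝ) (N : Matrix α γ ℝ) :
    frobSq (fromCols M N) = frobSq M + frobSq N := by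
  simp only [frobSq, Fintype.sum_sum_type, fromCols_apply_inl, fromCols_apply_inr,
    ← Finset.sum_add_distrib]

theorem mul_smul_of_one {R α β γ : Type*} [CommSemiring R] [Fintype β]
    (M : Matrix α β R) (c : R) :
    M * (c • of fun (_ : β) (_ : γ) => (1 : R)) = of fun i _ => c * ∑ j, M i j := by
  ext i k
  simp [mul_apply, Finset.mul_sum, mul_comm]

theorem fromCols_mul_fromBlocks_one_neg {R α β γ : Type*} [Ring R] [Fintype β] [Fintype γ]
    [DecidableEq β] [DecidableEq γ] (M : Matrix α β R) (N : Matrix α γ R)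
    (X : Matrix β γ R) (Y : Matrix γ β R) :
    fromCols M N * fromBlocks 1 (-X) (-Y) 1 = fromCols (M - N * Y) (N - M * X) := by
  rw [fromCols_mul_fromBlocks, Matrix.mul_one, Matrix.mul_one, Matrix.mul_neg, Matrix.mul_neg,
    ← sub_eq_add_neg, neg_add_eq_sub]

theorem cross_mean_deviation_eq_block_product_general
    {d p q : ℕ}
    (A : Matrix (Fin d) (Fin p) ℝ) (B : Matrix (Fin d) (Fin q) ℝ) :
    let mA : Fin d → ℝ := fun i => (p : ℝ)⁻¹ * ∑ j, A i j
    let mB : Fin d → ℝ := fun i => (q : ℝ)⁻¹ * ∑ j, B i j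
    let MB : Matrix (Fin d) (Fin p) ℝ := Matrix.of fun i _ => mB i
    let MA : Matrix (Fin d) (Fin q) ℝ := Matrix.of fun i _ => mA i
    let Ψ : Matrix (Fin p ⊕ Fin q) (Fin p ⊕ Fin q) ℝ :=
      Matrix.fromBlocks 1 (-((p : ℝ)⁻¹ • (Matrix.of fun _ _ => (1 : ℝ))))
        (-((q : ℝ)⁻¹ • (Matrix.of fun _ _ => (1 : ℝ)))) 1
    frobSq (A - MB) + frobSq (B - MA) = frobSq (Matrix.fromCols A B * Ψ) := by
  intro mA mB MB MA Ψ
  rw [fromCols_mul_fromBlocks_one_neg, mul_smul_of_one, mul_smul_of_one, frobSq_fromCols]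

/-- `‖A − M̄_B‖_F² + ‖B − M̄_A‖_F² = ‖[A B] Ψ‖_F²` where `M̄_B` (resp. `M̄_A`)
repeats the column mean of `B` (resp. `A`), and `Ψ` is the block matrix with
blocks `I_p`, `−(1/p) 1_p 1_qᵀ`, `−(1/q) 1_q 1_pᵀ`, `I_q`. -/
theorem cross_mean_deviation_eq_block_product
    {d p q : ℕ} (hp : 0 < p) (hq : 0 < q)
    (A : Matrix (Fin d) (Fin p) ℝ) (B : Matrix (Fin d) (Fin q) ℝ) :
    let mA : Fin d → ℝ := fun i => (p : ℝ)⁻¹ * ∑ j, A i j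
    let mB : Fin d → ℝ := fun i => (q : ℝ)⁻¹ * ∑ j, B i j
    let MB : Matrix (Fin d) (Fin p) ℝ := Matrix.of fun i _ => mB i
    let MA : Matrix (Fin d) (Fin q) ℝ := Matrix.of fun i _ => mA i
    let Ψ : Matrix (Fin p ⊕ Fin q) (Fin p ⊕ Fin q) ℝ :=
      Matrix.fromBlocks 1 (-((p : ℝ)⁻¹ • (Matrix.of fun _ _ => (1 : ℝ))))
        (-((q : ℝ)⁻¹ • (Matrix.of fun _ _ => (1 : ℝ)))) 1
    frobSq (A - MB) + frobSq (B - MA) = frobSq (Matrix.fromCols A B * Ψ) :=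
  cross_mean_deviation_eq_block_product_general A B
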